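/- arXiv:2309.16259 — 2 statements merged into one kernel-verified Lean document; each statement's English description precedes it below -/
import Mathlib

section
/- If y_i(⟪w, x_i⟫ + b) ≥ 1 for all i with w ≠ 0, then every data point x_i has distance at least 1/‖w‖ from the hyperplane {x : ⟪w, x⟫ + b = 0}. -/
/-! The affine function `z ↦ ⟪w, z⟫ + b` is `‖w‖`-Lipschitz by Cauchy–Schwarz and vanishes on the
hyperplane, so its value `|⟪w, p⟫ + b|` at a point `p` is at most `‖w‖` times the distance from `p` to
the hyperplane. Feasibility with labels `±1` makes that value at least `1` at every data point. -/

open RealInnerProductSpace Metric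

section Hyperplane

variable {E : Type*} [NormedAddCommGroup E] [InnerProductSpace ℝ E]

lemma nonempty_setOf_inner_add_eq_zero {w : E} (hw : w ≠ 0) (b : ℝ) :
    {z : E | ⟪w, z⟫ + b = 0}.Nonempty := by
  have hw' : ‖w‖ ≠ 0 := norm_ne_zero_iff.mpr hw
  refine ⟨(-b / ‖w‖ ^ 2) • w, ?_⟩
  simp only [Set.mem_ofPred_eq, real_inner_smul_right, real_inner_self_eq_norm_sq]
  field_simp
  ring

lemma abs_inner_add_le_norm_mul_dist {w z : E} {b : ℝ} (hz : ⟪w, z⟫ + b = 0) (p : E) :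
    |⟪w, p⟫ + b| ≤ ‖w‖ * dist p z := by
  have hp : ⟪w, p⟫ + b = ⟪w, p - z⟫ := by rw [inner_sub_right]; linarith
  rw [hp, dist_eq_norm]
  exact abs_real_inner_le_norm w _

lemma abs_inner_add_div_norm_le_infDist (w p : E) (b : ℝ) :
    |⟪w, p⟫ + b| / ‖w‖ ≤ infDist p {z : E | ⟪w, z⟫ + b = 0} := by
  rcases eq_or_ne w 0 with rfl | hw
  · simpa using infDist_nonneg
  rw [le_infDist (nonempty_setOf_inner_add_eq_zero hw b)]
  intro z hz
  rw [div_le_iff₀' (norm_pos_iff.mpr hw)]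
  exact abs_inner_add_le_norm_mul_dist hz p

end Hyperplane

lemma one_le_abs_of_one_le_mul {y t : ℝ} (hy : |y| ≤ 1) (h : 1 ≤ y * t) : 1 ≤ |t| :=
  calc 1 ≤ |y * t| := h.trans (le_abs_self _)
    _ = |y| * |t| := abs_mul y t
    _ ≤ |t| := mul_le_of_le_one_left (abs_nonneg t) hy

theorem svm_geometric_margin_bound_general {n N : ℕ}
    (x : Fin N → EuclideanSpace ℝ (Fin n)) (y : Fin N → ℝ)
    (hy : ∀ i, y i = 1 ∨ y i = -1)
    (w : EuclideanSpace ℝ (Fin n)) (b : ℝ)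
    (hfeas : ∀ i, y i * (⟪w, x i⟫ + b) ≥ 1) (i : Fin N) :
    Metric.infDist (x i) {z : EuclideanSpace ℝ (Fin n) | ⟪w, z⟫ + b = 0} ≥ 1 / ‖w‖ := by
  have hyi : |y i| ≤ 1 := by rcases hy i with h | h <;> simp [h]
  have hmargin : 1 ≤ |⟪w, x i⟫ + b| := one_le_abs_of_one_le_mul hyi (hfeas i)
  calc 1 / ‖w‖ ≤ |⟪w, x i⟫ + b| / ‖w‖ := by gcongr
    _ ≤ _ := abs_inner_add_div_norm_le_infDist w (x i) b

theorem svm_geometric_margin_bound {n N : ℕ}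
    (x : Fin N → EuclideanSpace ℝ (Fin n)) (y : Fin N → ℝ)
    (hy : ∀ i, y i = 1 ∨ y i = -1)
    (w : EuclideanSpace ℝ (Fin n)) (hw : w ≠ 0) (b : ℝ)
    (hfeas : ∀ i, y i * (⟪w, x i⟫ + b) ≥ 1) (i : Fin N) :
    Metric.infDist (x i) {z : EuclideanSpace ℝ (Fin n) | ⟪w, z⟫ + b = 0} ≥ 1 / ‖w‖ :=
  svm_geometric_margin_bound_general x y hy w b hfeas i
end

section
/- If the hard-margin constraint set is nonempty, then the infimum of (1/2)‖w‖² over feasible (w, b) is attained. -/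
open RealInnerProductSpace

theorem svm_hard_margin_attained {n N : ℕ}
    (x : Fin N → EuclideanSpace ℝ (Fin n)) (y : Fin N → ℝ)
    (hne : ∃ (w : EuclideanSpace ℝ (Fin n)) (b : ℝ), ∀ i, y i * (⟪w, x i⟫ + b) ≥ 1) :
    ∃ (w₀ : EuclideanSpace ℝ (Fin n)) (b₀ : ℝ),
      (∀ i, y i * (⟪w₀, x i⟫ + b₀) ≥ 1) ∧
      ∀ (w : EuclideanSpace ℝ (Fin n)) (b : ℝ),
        (∀ i, y i * (⟪w, x i⟫ + b) ≥ 1) → (1 / 2) * ‖w₀‖ ^ 2 ≤ (1 / 2) * ‖w‖ ^ 2 := by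
  obtain ⟨w₁, b₁, hw₁⟩ := hne
  -- squares comparison helper
  have hsq : ∀ a c : ℝ, 0 ≤ a → a ≤ c → (1/2) * a ^ 2 ≤ (1/2) * c ^ 2 := by
    intro a c ha hac
    have := pow_le_pow_left₀ ha hac 2
    linarith
  -- no zero labels
  have hy0 : ∀ i, y i ≠ 0 := by
    intro i h
    have := hw₁ i
    rw [h] at this
    simp at this
    linarith
  by_cases hNeg : ∃ i, y i < 0
  · by_cases hPos : ∃ j, 0 < y j
    · -- mixed case
      obtain ⟨i₀, hi₀⟩ := hNeg
      obtain ⟨j₀, hj₀⟩ := hPos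
      set K : Set (EuclideanSpace ℝ (Fin n)) :=
        {w | ∀ j i, 0 < y j → y i < 0 → (y j)⁻¹ - ⟪w, x j⟫ ≤ (y i)⁻¹ - ⟪w, x i⟫} with hK
      -- feasibility implies membership in K
      have mem_of_feas : ∀ w b, (∀ i, y i * (⟪w, x i⟫ + b) ≥ 1) → w ∈ K := by
        intro w b hfeas j i hj hi
        have h1 := hfeas j
        have h2 := hfeas i
        have l1 : (y j)⁻¹ - ⟪w, x j⟫ ≤ b := by
          have : (y j)⁻¹ * 1 ≤ (y j)⁻¹ * (y j * (⟪w, x j⟫ + b)) :=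
            mul_le_mul_of_nonneg_left h1 (by positivity)
          rw [inv_mul_cancel_left₀ (hy0 j)] at this
          linarith
        have l2 : b ≤ (y i)⁻¹ - ⟪w, x i⟫ := by
          have : (y i)⁻¹ * (y i * (⟪w, x i⟫ + b)) ≤ (y i)⁻¹ * 1 := by
            apply mul_le_mul_of_nonpos_left h2
            exact le_of_lt (inv_neg''.mpr hi)
          rw [inv_mul_cancel_left₀ (hy0 i)] at this
          linarith
        linarith
      -- membership in K gives a feasible b
      have feas_of_mem : ∀ w, w ∈ K → ∃ b, ∀ i, y i * (⟪w, x i⟫ + b) ≥ 1 := by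
        intro w hw
        classical
        set P : Finset (Fin N) := Finset.univ.filter (fun j => 0 < y j) with hP
        have hPne : P.Nonempty := ⟨j₀, by simp [hP, hj₀]⟩
        refine ⟨P.sup' hPne (fun j => (y j)⁻¹ - ⟪w, x j⟫), ?_⟩
        intro i
        rcases lt_or_gt_of_ne (hy0 i) with hneg | hpos
        · have hub : P.sup' hPne (fun j => (y j)⁻¹ - ⟪w, x j⟫) ≤ (y i)⁻¹ - ⟪w, x i⟫ := by
            apply Finset.sup'_le
            intro j hj
            exact hw j i (by simpa [hP] using hj) hneg
          have : y i * ((y i)⁻¹ - ⟪w, x i⟫ + ⟪w, x i⟫) ≤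
              y i * (⟪w, x i⟫ + P.sup' hPne (fun j => (y j)⁻¹ - ⟪w, x j⟫)) := by
            apply mul_le_mul_of_nonpos_left _ (le_of_lt hneg)
            linarith
          have hone : y i * ((y i)⁻¹ - ⟪w, x i⟫ + ⟪w, x i⟫) = 1 := by
            have h' : (y i)⁻¹ - ⟪w, x i⟫ + ⟪w, x i⟫ = (y i)⁻¹ := by ring
            rw [h', mul_inv_cancel₀ (hy0 i)]
          linarith
        · have hlb : (y i)⁻¹ - ⟪w, x i⟫ ≤ P.sup' hPne (fun j => (y j)⁻¹ - ⟪w, x j⟫) :=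
            Finset.le_sup' (fun j => (y j)⁻¹ - ⟪w, x j⟫) (by simp [hP, hpos])
          have : y i * ((y i)⁻¹ - ⟪w, x i⟫ + ⟪w, x i⟫) ≤
              y i * (⟪w, x i⟫ + P.sup' hPne (fun j => (y j)⁻¹ - ⟪w, x j⟫)) := by
            apply mul_le_mul_of_nonneg_left _ (le_of_lt hpos)
            linarith
          have hone : y i * ((y i)⁻¹ - ⟪w, x i⟫ + ⟪w, x i⟫) = 1 := by
            have h' : (y i)⁻¹ - ⟪w, x i⟫ + ⟪w, x i⟫ = (y i)⁻¹ := by ring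
            rw [h', mul_inv_cancel₀ (hy0 i)]
          linarith
      -- K is closed
      have hKclosed : IsClosed K := by
        have : K = ⋂ (j : Fin N) (i : Fin N),
            {w : EuclideanSpace ℝ (Fin n) |
              0 < y j → y i < 0 → (y j)⁻¹ - ⟪w, x j⟫ ≤ (y i)⁻¹ - ⟪w, x i⟫} := by
          ext w; simp [hK, Set.mem_iInter]
        rw [this]
        refine isClosed_iInter fun j => isClosed_iInter fun i => ?_
        by_cases hj : 0 < y j
        · by_cases hi : y i < 0
          · have : {w : EuclideanSpace ℝ (Fin n) |
                0 < y j → y i < 0 → (y j)⁻¹ - ⟪w, x j⟫ ≤ (y i)⁻¹ - ⟪w, x i⟫} =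
                {w | (y j)⁻¹ - ⟪w, x j⟫ ≤ (y i)⁻¹ - ⟪w, x i⟫} := by
              ext w; simp [hj, hi]
            rw [this]
            exact isClosed_le
              (continuous_const.sub (Continuous.inner continuous_id continuous_const))
              (continuous_const.sub (Continuous.inner continuous_id continuous_const))
          · have : {w : EuclideanSpace ℝ (Fin n) |
                0 < y j → y i < 0 → (y j)⁻¹ - ⟪w, x j⟫ ≤ (y i)⁻¹ - ⟪w, x i⟫} = Set.univ := by
              ext w; simp [hi]
            rw [this]; exact isClosed_univ
        · have : {w : EuclideanSpace ℝ (Fin n) |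
              0 < y j → y i < 0 → (y j)⁻¹ - ⟪w, x j⟫ ≤ (y i)⁻¹ - ⟪w, x i⟫} = Set.univ := by
            ext w; simp [hj]
          rw [this]; exact isClosed_univ
      -- compact feasible region
      have hw₁K : w₁ ∈ K := mem_of_feas w₁ b₁ hw₁
      set C : Set (EuclideanSpace ℝ (Fin n)) := K ∩ Metric.closedBall 0 ‖w₁‖ with hC
      have hCcomp : IsCompact C :=
        (isCompact_closedBall (0 : EuclideanSpace ℝ (Fin n)) ‖w₁‖).inter_left hKclosed
      have hCne : C.Nonempty := ⟨w₁, hw₁K, by simp [Metric.mem_closedBall]⟩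
      obtain ⟨w₀, hw₀C, hw₀min⟩ :=
        hCcomp.exists_isMinOn hCne (continuous_norm.continuousOn :
          ContinuousOn (fun w : EuclideanSpace ℝ (Fin n) => ‖w‖) C)
      obtain ⟨b₀, hb₀⟩ := feas_of_mem w₀ hw₀C.1
      refine ⟨w₀, b₀, hb₀, ?_⟩
      intro w b hfeas
      apply hsq _ _ (norm_nonneg _)
      by_cases hwball : ‖w‖ ≤ ‖w₁‖
      · exact hw₀min ⟨mem_of_feas w b hfeas, by simpa [Metric.mem_closedBall] using hwball⟩
      · have h1 : ‖w₀‖ ≤ ‖w₁‖ := hw₀min ⟨hw₁K, by simp [Metric.mem_closedBall]⟩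
        linarith [not_le.mp hwball]
    · -- all labels negative
      push_neg at hPos
      have hallneg : ∀ i, y i < 0 := fun i => lt_of_le_of_ne (hPos i) (hy0 i)
      obtain ⟨i₀, _⟩ := hNeg
      have hNE : Nonempty (Fin N) := ⟨i₀⟩
      refine ⟨0, Finset.univ.inf' Finset.univ_nonempty (fun i => (y i)⁻¹), ?_, ?_⟩
      · intro i
        have hle : Finset.univ.inf' Finset.univ_nonempty (fun i => (y i)⁻¹) ≤ (y i)⁻¹ :=
          Finset.inf'_le _ (Finset.mem_univ i)
        have : y i * (y i)⁻¹ ≤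
            y i * Finset.univ.inf' Finset.univ_nonempty (fun i => (y i)⁻¹) :=
          mul_le_mul_of_nonpos_left hle (le_of_lt (hallneg i))
        rw [mul_inv_cancel₀ (hy0 i)] at this
        simpa [inner_zero_left] using this
      · intro w b _
        apply hsq _ _ (norm_nonneg _)
        simp
  · -- no negative labels: all positive
    push_neg at hNeg
    have hallpos : ∀ i, 0 < y i := fun i => lt_of_le_of_ne (hNeg i) (Ne.symm (hy0 i))
    by_cases hN : Nonempty (Fin N)
    · refine ⟨0, Finset.univ.sup' Finset.univ_nonempty (fun i => (y i)⁻¹), ?_, ?_⟩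
      · intro i
        have hle : (y i)⁻¹ ≤ Finset.univ.sup' Finset.univ_nonempty (fun i => (y i)⁻¹) :=
          Finset.le_sup' (fun i => (y i)⁻¹) (Finset.mem_univ i)
        have : y i * (y i)⁻¹ ≤
            y i * Finset.univ.sup' Finset.univ_nonempty (fun i => (y i)⁻¹) :=
          mul_le_mul_of_nonneg_left hle (le_of_lt (hallpos i))
        rw [mul_inv_cancel₀ (hy0 i)] at this
        simpa [inner_zero_left] using this
      · intro w b _
        apply hsq _ _ (norm_nonneg _)
        simp
    · refine ⟨0, 0, fun i => absurd ⟨i⟩ hN, ?_⟩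
      intro w b _
      apply hsq _ _ (norm_nonneg _)
      simp
end
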